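/- Let θ, σ, φ, ψ be differentiable real-valued functions on a real interval satisfying the Einstein–Klein–Gordon evolution system, and define C(t) = σ(t)² + V(φ(t)) + ψ(t)²/2 − θ(t)²/3. Then C is differentiable and satisfies C'(t) = ((2/√3)σ(t) − (2/3)θ(t))·C(t) at every t. -/

import Mathlib

/-!
Along any differentiable curve the chain rule gives
`C' = 2σσ' + V'(φ)φ' + ψψ' − (2/3)θθ'`. Substituting the evolution equations, the two
`V'(φ)ψ` terms cancel and what remains is a polynomial identity in `θ, σ, ψ, V(φ)` and `1/√3`
which factors as `((2/√3)σ − (2/3)θ)·C`.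
-/

theorem HasDerivAt.bianchiI_constraint {V θ σ φ ψ : ℝ → ℝ} {t V' θ' σ' φ' ψ' : ℝ}
    (hV : HasDerivAt V V' (φ t)) (hθ : HasDerivAt θ θ' t) (hσ : HasDerivAt σ σ' t)
    (hφ : HasDerivAt φ φ' t) (hψ : HasDerivAt ψ ψ' t) :
    HasDerivAt (fun s ↦ σ s ^ 2 + V (φ s) + ψ s ^ 2 / 2 - θ s ^ 2 / 3)
      (2 * σ t * σ' + V' * φ' + ψ t * ψ' - 2 / 3 * θ t * θ') t := by
  refine ((((hσ.pow 2).add (hV.comp t hφ)).add ((hψ.pow 2).div_const 2)).sub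
    ((hθ.pow 2).div_const 3)).congr_deriv ?_
  ring

theorem bianchiI_constraint_rate_eq (s θ σ ψ v v' : ℝ) :
    2 * σ * (-θ ^ 2 / (3 * s) - θ * σ + σ ^ 2 / s + (1 / s) * (v + ψ ^ 2 / 2))
        + v' * ψ + ψ * (-θ * ψ - v')
        - 2 / 3 * θ * (-(1 / 3) * θ ^ 2 - 2 * σ ^ 2 + v - ψ ^ 2)
      = ((2 / s) * σ - (2 / 3) * θ) * (σ ^ 2 + v + ψ ^ 2 / 2 - θ ^ 2 / 3) := by
  ring

theorem constraint_deviation_evolution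
    (V : ℝ → ℝ) (hV : Differentiable ℝ V)
    (θ σ φ ψ : ℝ → ℝ)
    (hθ : Differentiable ℝ θ) (hσ : Differentiable ℝ σ)
    (hφ : Differentiable ℝ φ) (hψ : Differentiable ℝ ψ)
    (eθ : ∀ t, deriv θ t = -(1 / 3) * θ t ^ 2 - 2 * σ t ^ 2 + V (φ t) - ψ t ^ 2)
    (eσ : ∀ t, deriv σ t = -θ t ^ 2 / (3 * Real.sqrt 3) - θ t * σ t
        + σ t ^ 2 / Real.sqrt 3 + (1 / Real.sqrt 3) * (V (φ t) + ψ t ^ 2 / 2))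
    (eφ : ∀ t, deriv φ t = ψ t)
    (eψ : ∀ t, deriv ψ t = -θ t * ψ t - deriv V (φ t))
    (C : ℝ → ℝ)
    (hC : ∀ t, C t = σ t ^ 2 + V (φ t) + ψ t ^ 2 / 2 - θ t ^ 2 / 3) :
    Differentiable ℝ C ∧
      ∀ t, deriv C t = ((2 / Real.sqrt 3) * σ t - (2 / 3) * θ t) * C t := by
  obtain rfl : C = fun t ↦ σ t ^ 2 + V (φ t) + ψ t ^ 2 / 2 - θ t ^ 2 / 3 := funext hC
  have hC' : ∀ t, HasDerivAt (fun t ↦ σ t ^ 2 + V (φ t) + ψ t ^ 2 / 2 - θ t ^ 2 / 3)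
      (((2 / Real.sqrt 3) * σ t - (2 / 3) * θ t) *
        (σ t ^ 2 + V (φ t) + ψ t ^ 2 / 2 - θ t ^ 2 / 3)) t := fun t ↦ by
    have h := (hV (φ t)).hasDerivAt.bianchiI_constraint (hθ t).hasDerivAt (hσ t).hasDerivAt
      (hφ t).hasDerivAt (hψ t).hasDerivAt
    rwa [eθ, eσ, eφ, eψ, bianchiI_constraint_rate_eq] at h
  exact ⟨fun t ↦ (hC' t).differentiableAt, fun t ↦ (hC' t).deriv⟩
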